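/- Let A be a finite-dimensional Frobenius algebra over a field K. The category of right A-modules is isomorphic to the category of right A-comodules (with respect to the Frobenius comultiplication δ and counit ε), via the functor that sends a right A-module (M, m) to the right A-comodule (M, ∇_m) and is the identity on underlying maps; its inverse sends a right A-comodule (M, ∇) to the right A-module (M, m_∇). -/

import Mathlib

open TensorProduct CategoryTheory

universe u

/-- A right module over the `K`-algebra `A`: a `K`-vector space `V` together with an
action map `act : V ⊗ A → V` satisfying the right-module axioms. -/
structure RightModuleOver (K : Type u) [Field K] (A : Type u) [Ring A] [Algebra K A] :
    Type (u + 1) where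
  V : Type u
  [addcg : AddCommGroup V]
  [mod : Module K V]
  act : V ⊗[K] A →ₗ[K] V
  act_act : ∀ (x : V) (a b : A), act (act (x ⊗ₜ[K] a) ⊗ₜ[K] b) = act (x ⊗ₜ[K] (a * b))
  act_one : ∀ x : V, act (x ⊗ₜ[K] (1 : A)) = x

attribute [instance] RightModuleOver.addcg RightModuleOver.mod

/-- A right comodule over `A` relative to the comultiplication `δ` with counit `ε`:
a `K`-vector space `V` with `co : V → V ⊗ A` such that
`(co ⊗ id) ∘ co = (id ⊗ δ) ∘ co` and `(id ⊗ ε) ∘ co = id`. -/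
structure RightComoduleOver (K : Type u) [Field K] (A : Type u) [Ring A] [Algebra K A]
    (δ : A →ₗ[K] A ⊗[K] A) (ε : A →ₗ[K] K) : Type (u + 1) where
  V : Type u
  [addcg : AddCommGroup V]
  [mod : Module K V]
  co : V →ₗ[K] V ⊗[K] A
  co_coassoc : ∀ x : V,
    (TensorProduct.assoc K V A A)
        ((TensorProduct.map co (LinearMap.id : A →ₗ[K] A)) (co x)) =
      (TensorProduct.map (LinearMap.id : V →ₗ[K] V) δ) (co x)
  co_counit : ∀ x : V,
    (TensorProduct.rid K V)
        ((TensorProduct.map (LinearMap.id : V →ₗ[K] V) ε) (co x)) = x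

attribute [instance] RightComoduleOver.addcg RightComoduleOver.mod

variable (K : Type u) [Field K] (A : Type u) [Ring A] [Algebra K A]
  (δ : A →ₗ[K] A ⊗[K] A) (ε : A →ₗ[K] K)

/-- The category of right `A`-modules; morphisms are `K`-linear maps commuting with
the actions. -/
instance : Category (RightModuleOver K A) where
  Hom X Y := {f : X.V →ₗ[K] Y.V // ∀ (x : X.V) (a : A),
    f (X.act (x ⊗ₜ[K] a)) = Y.act (f x ⊗ₜ[K] a)}
  id X := ⟨LinearMap.id, fun _ _ => rfl⟩
  comp f g := ⟨g.1 ∘ₗ f.1, fun x a => by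
    simp only [LinearMap.comp_apply, f.2, g.2]⟩
  id_comp f := by apply Subtype.ext; rfl
  comp_id f := by apply Subtype.ext; rfl
  assoc f g h := by apply Subtype.ext; rfl

/-- The category of right `A`-comodules; morphisms are `K`-linear maps commuting with
the comodule structure maps. -/
instance : Category (RightComoduleOver K A δ ε) where
  Hom X Y := {f : X.V →ₗ[K] Y.V // ∀ x : X.V,
    Y.co (f x) = (TensorProduct.map f (LinearMap.id : A →ₗ[K] A)) (X.co x)}
  id X := ⟨LinearMap.id, fun x => by
    simp only [LinearMap.id_apply, TensorProduct.map_id, LinearMap.id_coe, id_eq]⟩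
  comp f g := ⟨g.1 ∘ₗ f.1, fun x => by
    simp only [LinearMap.comp_apply, f.2, g.2]
    rw [← LinearMap.comp_apply, ← TensorProduct.map_comp]
    rfl⟩
  id_comp f := by apply Subtype.ext; rfl
  comp_id f := by apply Subtype.ext; rfl
  assoc f g h := by apply Subtype.ext; rfl

/-- The comodule structure map `∇_m = (m ⊗ id_A) ∘ (id_M ⊗ δ) ∘ (x ↦ x ⊗ 1_A)`. -/
noncomputable def nablaOf {M : Type u} [AddCommGroup M] [Module K M]
    (m : M ⊗[K] A →ₗ[K] M) : M →ₗ[K] M ⊗[K] A :=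
  (TensorProduct.map m (LinearMap.id : A →ₗ[K] A)) ∘ₗ
    (TensorProduct.assoc K M A A).symm.toLinearMap ∘ₗ
      (TensorProduct.map (LinearMap.id : M →ₗ[K] M) δ) ∘ₗ
        ((TensorProduct.mk K M A).flip 1)

/-- The module structure map `m_∇ = (id_M ⊗ ε) ∘ (id_M ⊗ μ) ∘ (∇ ⊗ id_A)`. -/
noncomputable def modOf {M : Type u} [AddCommGroup M] [Module K M]
    (co : M →ₗ[K] M ⊗[K] A) : M ⊗[K] A →ₗ[K] M :=
  (TensorProduct.rid K M).toLinearMap ∘ₗ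
    (TensorProduct.map (LinearMap.id : M →ₗ[K] M) ε) ∘ₗ
      (TensorProduct.map (LinearMap.id : M →ₗ[K] M) (LinearMap.mul' K A)) ∘ₗ
        (TensorProduct.assoc K M A A).toLinearMap ∘ₗ
          (TensorProduct.map co (LinearMap.id : A →ₗ[K] A))

/-!
Since `δ` is a map of bimodules, it is determined by its Casimir element
`δ 1 = ∑ eᵢ ⊗ fᵢ`: `δ c = ∑ c eᵢ ⊗ fᵢ = ∑ eᵢ ⊗ fᵢ c`, and counitality becomes the pair of
dual-basis identities `∑ ε (fᵢ c) eᵢ = c = ∑ ε (c eᵢ) fᵢ`. In these terms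
`∇_m x = ∑ m (x ⊗ eᵢ) ⊗ fᵢ` and `m_∇ (x ⊗ a) = ∑ ε (c a) y` for `∇ x = ∑ y ⊗ c`, so each of the
two constructions undoes the other by one of the dual-basis identities, and both are the
identity on maps. The module axioms for `m_∇` and the comodule axioms for `∇_m` reduce in
the same way to the dual-basis identities and to coassociativity of `δ` at `1`.
-/

section FrobeniusDuality

variable {K A}

def IsOuterBimoduleHom (δ : A →ₗ[K] A ⊗[K] A) : Prop :=
  ∀ a x b : A, δ (a * x * b) =
    (TensorProduct.map (LinearMap.mulLeft K a) (LinearMap.mulRight K b)) (δ x)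

def IsLeftCounit (δ : A →ₗ[K] A ⊗[K] A) (ε : A →ₗ[K] K) : Prop :=
  ∀ a : A, (TensorProduct.lid K A) ((TensorProduct.map ε (LinearMap.id : A →ₗ[K] A)) (δ a)) = a

def IsRightCounit (δ : A →ₗ[K] A ⊗[K] A) (ε : A →ₗ[K] K) : Prop :=
  ∀ a : A, (TensorProduct.rid K A) ((TensorProduct.map (LinearMap.id : A →ₗ[K] A) ε) (δ a)) = a

def IsCoassoc (δ : A →ₗ[K] A ⊗[K] A) : Prop :=
  ∀ a : A, (TensorProduct.assoc K A A A) ((TensorProduct.map δ (LinearMap.id : A →ₗ[K] A)) (δ a)) =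
    (TensorProduct.map (LinearMap.id : A →ₗ[K] A) δ) (δ a)

variable {δ ε}

section Casimir

variable {s : Finset (A × A)}

theorem IsOuterBimoduleHom.apply_eq_sum_mul_tmul (hδ : IsOuterBimoduleHom δ)
    (hs : δ 1 = ∑ p ∈ s, p.1 ⊗ₜ[K] p.2) (c : A) :
    δ c = ∑ p ∈ s, (c * p.1) ⊗ₜ[K] p.2 := by
  simpa [hs] using hδ c 1 1

theorem IsOuterBimoduleHom.apply_eq_sum_tmul_mul (hδ : IsOuterBimoduleHom δ)
    (hs : δ 1 = ∑ p ∈ s, p.1 ⊗ₜ[K] p.2) (c : A) :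
    δ c = ∑ p ∈ s, p.1 ⊗ₜ[K] (p.2 * c) := by
  simpa [hs] using hδ 1 1 c

theorem IsRightCounit.sum_counit_mul_smul (hε : IsRightCounit δ ε) (hδ : IsOuterBimoduleHom δ)
    (hs : δ 1 = ∑ p ∈ s, p.1 ⊗ₜ[K] p.2) (c : A) :
    ∑ p ∈ s, ε (p.2 * c) • p.1 = c := by
  simpa [hδ.apply_eq_sum_tmul_mul hs c] using hε c

theorem IsLeftCounit.sum_counit_mul_smul (hε : IsLeftCounit δ ε) (hδ : IsOuterBimoduleHom δ)
    (hs : δ 1 = ∑ p ∈ s, p.1 ⊗ₜ[K] p.2) (c : A) :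
    ∑ p ∈ s, ε (c * p.1) • p.2 = c := by
  simpa [hδ.apply_eq_sum_mul_tmul hs c] using hε c

theorem IsCoassoc.sum_tmul_apply (hcoassoc : IsCoassoc δ) (hδ : IsOuterBimoduleHom δ)
    (hs : δ 1 = ∑ p ∈ s, p.1 ⊗ₜ[K] p.2) :
    ∑ p ∈ s, p.1 ⊗ₜ[K] δ p.2 = ∑ p ∈ s, ∑ q ∈ s, (p.1 * q.1) ⊗ₜ[K] (q.2 ⊗ₜ[K] p.2) := by
  simpa only [hs, map_sum, TensorProduct.map_tmul, LinearMap.id_apply,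
    hδ.apply_eq_sum_mul_tmul hs, TensorProduct.sum_tmul, TensorProduct.assoc_tmul]
    using (hcoassoc 1).symm

end Casimir

section Contraction

variable {M N : Type u} [AddCommGroup M] [Module K M] [AddCommGroup N] [Module K N]

variable (ε) in
noncomputable def counitContract (a : A) : M ⊗[K] A →ₗ[K] M :=
  (TensorProduct.rid K M).toLinearMap ∘ₗ LinearMap.lTensor M (ε ∘ₗ LinearMap.mulRight K a)

@[simp]
theorem counitContract_tmul (a : A) (x : M) (c : A) :
    counitContract ε a (x ⊗ₜ[K] c) = ε (c * a) • x := by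
  simp [counitContract]

theorem counitContract_one (u : M ⊗[K] A) :
    counitContract ε 1 u = TensorProduct.rid K M (TensorProduct.map LinearMap.id ε u) := by
  induction u using TensorProduct.induction_on with
  | zero => simp
  | tmul x c => simp
  | add u v hu hv => simp only [map_add, hu, hv]

theorem map_counitContract (f : M →ₗ[K] N) (a : A) (u : M ⊗[K] A) :
    f (counitContract ε a u) = counitContract ε a (TensorProduct.map f LinearMap.id u) := by
  induction u using TensorProduct.induction_on with
  | zero => simp
  | tmul x c => simp
  | add u v hu hv => simp only [map_add, hu, hv]

theorem modOf_tmul (co : M →ₗ[K] M ⊗[K] A) (x : M) (a : A) :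
    modOf K A ε co (x ⊗ₜ[K] a) = counitContract ε a (co x) := by
  suffices h : (TensorProduct.rid K M).toLinearMap ∘ₗ
      (TensorProduct.map LinearMap.id ε) ∘ₗ (TensorProduct.map LinearMap.id (LinearMap.mul' K A)) ∘ₗ
        (TensorProduct.assoc K M A A).toLinearMap ∘ₗ (TensorProduct.mk K (M ⊗[K] A) A).flip a =
      counitContract ε a from LinearMap.congr_fun h (co x)
  ext x c
  simp

theorem nablaOf_apply {s : Finset (A × A)} (hs : δ 1 = ∑ p ∈ s, p.1 ⊗ₜ[K] p.2)
    (m : M ⊗[K] A →ₗ[K] M) (x : M) :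
    nablaOf K A δ m x = ∑ p ∈ s, m (x ⊗ₜ[K] p.1) ⊗ₜ[K] p.2 := by
  simp [nablaOf, hs, TensorProduct.tmul_sum]

end Contraction

section Constructions

variable {M : Type u} [AddCommGroup M] [Module K M]

theorem modOf_nablaOf (hε : IsRightCounit δ ε) (hδ : IsOuterBimoduleHom δ)
    (m : M ⊗[K] A →ₗ[K] M) : modOf K A ε (nablaOf K A δ m) = m := by
  obtain ⟨s, hs⟩ := TensorProduct.exists_finset (δ (1 : A))
  refine TensorProduct.ext' fun x a => ?_
  calc modOf K A ε (nablaOf K A δ m) (x ⊗ₜ[K] a)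
      = ∑ p ∈ s, ε (p.2 * a) • m (x ⊗ₜ[K] p.1) := by simp [modOf_tmul, nablaOf_apply hs]
    _ = m (x ⊗ₜ[K] ∑ p ∈ s, ε (p.2 * a) • p.1) := by
      simp [TensorProduct.tmul_sum, TensorProduct.tmul_smul]
    _ = m (x ⊗ₜ[K] a) := by rw [hε.sum_counit_mul_smul hδ hs]

theorem nablaOf_modOf (hε : IsLeftCounit δ ε) (hδ : IsOuterBimoduleHom δ)
    (co : M →ₗ[K] M ⊗[K] A) : nablaOf K A δ (modOf K A ε co) = co := by
  obtain ⟨s, hs⟩ := TensorProduct.exists_finset (δ (1 : A))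
  have h : ∀ u : M ⊗[K] A, ∑ p ∈ s, counitContract ε p.1 u ⊗ₜ[K] p.2 = u := by
    intro u
    induction u using TensorProduct.induction_on with
    | zero => simp
    | tmul x c =>
      simp only [counitContract_tmul, TensorProduct.smul_tmul, ← TensorProduct.tmul_sum,
        hε.sum_counit_mul_smul hδ hs]
    | add u v hu hv => simp only [map_add, TensorProduct.add_tmul, Finset.sum_add_distrib, hu, hv]
  ext x
  simp only [nablaOf_apply hs, modOf_tmul, h]

end Constructions

section ModuleToComodule

theorem nablaOf_counit (hε : IsRightCounit δ ε) (hδ : IsOuterBimoduleHom δ)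
    (X : RightModuleOver K A) (x : X.V) :
    TensorProduct.rid K X.V (TensorProduct.map LinearMap.id ε (nablaOf K A δ X.act x)) = x := by
  obtain ⟨s, hs⟩ := TensorProduct.exists_finset (δ (1 : A))
  calc TensorProduct.rid K X.V (TensorProduct.map LinearMap.id ε (nablaOf K A δ X.act x))
      = X.act (x ⊗ₜ[K] ∑ p ∈ s, ε (p.2 * 1) • p.1) := by
        simp [nablaOf_apply hs, TensorProduct.tmul_sum, TensorProduct.tmul_smul]
    _ = x := by rw [hε.sum_counit_mul_smul hδ hs, X.act_one]

theorem nablaOf_coassoc (hcoassoc : IsCoassoc δ) (hδ : IsOuterBimoduleHom δ)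
    (X : RightModuleOver K A) (x : X.V) :
    TensorProduct.assoc K X.V A A
        (TensorProduct.map (nablaOf K A δ X.act) LinearMap.id (nablaOf K A δ X.act x)) =
      TensorProduct.map LinearMap.id δ (nablaOf K A δ X.act x) := by
  obtain ⟨s, hs⟩ := TensorProduct.exists_finset (δ (1 : A))
  have h := congrArg (TensorProduct.map (X.act ∘ₗ TensorProduct.mk K X.V A x) LinearMap.id)
    (hcoassoc.sum_tmul_apply hδ hs)
  simp only [map_sum, TensorProduct.map_tmul, LinearMap.comp_apply, TensorProduct.mk_apply,
    LinearMap.id_apply] at h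
  simp [nablaOf_apply hs, TensorProduct.sum_tmul, X.act_act, h]

theorem nablaOf_map {X Y : RightModuleOver K A} (f : X ⟶ Y) (x : X.V) :
    nablaOf K A δ Y.act (f.1 x) = TensorProduct.map f.1 LinearMap.id (nablaOf K A δ X.act x) := by
  obtain ⟨s, hs⟩ := TensorProduct.exists_finset (δ (1 : A))
  simp [nablaOf_apply hs, f.2]

end ModuleToComodule

section ComoduleToModule

theorem modOf_one (X : RightComoduleOver K A δ ε) (x : X.V) :
    modOf K A ε X.co (x ⊗ₜ[K] 1) = x := by
  rw [modOf_tmul, counitContract_one, X.co_counit]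

theorem modOf_assoc (hε : IsRightCounit δ ε) (hδ : IsOuterBimoduleHom δ)
    (X : RightComoduleOver K A δ ε) (x : X.V) (a b : A) :
    modOf K A ε X.co (modOf K A ε X.co (x ⊗ₜ[K] a) ⊗ₜ[K] b) =
      modOf K A ε X.co (x ⊗ₜ[K] (a * b)) := by
  obtain ⟨s, hs⟩ := TensorProduct.exists_finset (δ (1 : A))
  have key : ∀ u : X.V ⊗[K] A, counitContract ε b (counitContract ε a
      ((TensorProduct.assoc K X.V A A).symm (TensorProduct.map LinearMap.id δ u))) =
      counitContract ε (a * b) u := by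
    intro u
    induction u using TensorProduct.induction_on with
    | zero => simp
    | tmul y c =>
      have hsum : ∑ q ∈ s, ε (q.2 * a) * ε (c * (q.1 * b)) = ε (c * (a * b)) := by
        conv_rhs => rw [← hε.sum_counit_mul_smul hδ hs a]
        simp [Finset.mul_sum, Finset.sum_mul]
      simp [hδ.apply_eq_sum_mul_tmul hs c, TensorProduct.tmul_sum, smul_smul, ← Finset.sum_smul,
        mul_assoc, hsum]
    | add u v hu hv => simp only [map_add, hu, hv]
  rw [modOf_tmul, modOf_tmul, modOf_tmul, map_counitContract, ← key,
    ← X.co_coassoc, LinearEquiv.symm_apply_apply]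

theorem modOf_map {X Y : RightComoduleOver K A δ ε} (f : X ⟶ Y) (x : X.V) (a : A) :
    f.1 (modOf K A ε X.co (x ⊗ₜ[K] a)) = modOf K A ε Y.co (f.1 x ⊗ₜ[K] a) := by
  rw [modOf_tmul, modOf_tmul, map_counitContract, f.2]

end ComoduleToModule

theorem RightModuleOver.mk_eq_of_act_eq (X : RightModuleOver K A) {act : X.V ⊗[K] A →ₗ[K] X.V}
    (h : act = X.act) (act_act act_one) :
    ({ V := X.V, act := act, act_act := act_act, act_one := act_one } : RightModuleOver K A) =
      X := by
  subst h; rfl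

theorem RightComoduleOver.mk_eq_of_co_eq (X : RightComoduleOver K A δ ε)
    {co : X.V →ₗ[K] X.V ⊗[K] A} (h : co = X.co) (co_coassoc co_counit) :
    ({ V := X.V, co := co, co_coassoc := co_coassoc, co_counit := co_counit } :
      RightComoduleOver K A δ ε) = X := by
  subst h; rfl

theorem RightModuleOver.hom_heq {X X' Y Y' : RightModuleOver K A} (hX : X = X') (hY : Y = Y')
    {f : X ⟶ Y} {f' : X' ⟶ Y'} (h : HEq f.1 f'.1) : HEq f f' := by
  subst hX hY; exact heq_of_eq (Subtype.ext (eq_of_heq h))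

theorem RightComoduleOver.hom_heq {X X' Y Y' : RightComoduleOver K A δ ε} (hX : X = X')
    (hY : Y = Y') {f : X ⟶ Y} {f' : X' ⟶ Y'} (h : HEq f.1 f'.1) : HEq f f' := by
  subst hX hY; exact heq_of_eq (Subtype.ext (eq_of_heq h))

noncomputable def moduleToComodule (hcoassoc : IsCoassoc δ) (hε : IsRightCounit δ ε)
    (hδ : IsOuterBimoduleHom δ) : RightModuleOver K A ⥤ RightComoduleOver K A δ ε where
  obj X :=
    { V := X.V
      co := nablaOf K A δ X.act
      co_coassoc := nablaOf_coassoc hcoassoc hδ X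
      co_counit := nablaOf_counit hε hδ X }
  map f := ⟨f.1, nablaOf_map f⟩

noncomputable def comoduleToModule (hε : IsRightCounit δ ε) (hδ : IsOuterBimoduleHom δ) :
    RightComoduleOver K A δ ε ⥤ RightModuleOver K A where
  obj X :=
    { V := X.V
      act := modOf K A ε X.co
      act_act := modOf_assoc hε hδ X
      act_one := modOf_one X }
  map f := ⟨f.1, modOf_map f⟩

theorem moduleToComodule_comp_comoduleToModule (hcoassoc : IsCoassoc δ)
    (hε : IsRightCounit δ ε) (hδ : IsOuterBimoduleHom δ) :
    moduleToComodule hcoassoc hε hδ ⋙ comoduleToModule hε hδ = 𝟭 (RightModuleOver K A) := by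
  have h_obj (X : RightModuleOver K A) :
      (moduleToComodule hcoassoc hε hδ ⋙ comoduleToModule hε hδ).obj X = X :=
    X.mk_eq_of_act_eq (modOf_nablaOf hε hδ X.act) _ _
  exact Functor.hext h_obj fun X Y f =>
    RightModuleOver.hom_heq (h_obj X) (h_obj Y) HEq.rfl

theorem comoduleToModule_comp_moduleToComodule (hcoassoc : IsCoassoc δ)
    (hεl : IsLeftCounit δ ε) (hεr : IsRightCounit δ ε) (hδ : IsOuterBimoduleHom δ) :
    comoduleToModule hεr hδ ⋙ moduleToComodule hcoassoc hεr hδ =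
      𝟭 (RightComoduleOver K A δ ε) := by
  have h_obj (X : RightComoduleOver K A δ ε) :
      (comoduleToModule hεr hδ ⋙ moduleToComodule hcoassoc hεr hδ).obj X = X :=
    X.mk_eq_of_co_eq (nablaOf_modOf hεl hδ X.co) _ _
  exact Functor.hext h_obj fun X Y f =>
    RightComoduleOver.hom_heq (h_obj X) (h_obj Y) HEq.rfl

end FrobeniusDuality

theorem modules_iso_comodules
    (hcoassoc : ∀ a : A,
      (TensorProduct.assoc K A A A)
          ((TensorProduct.map δ (LinearMap.id : A →ₗ[K] A)) (δ a)) =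
        (TensorProduct.map (LinearMap.id : A →ₗ[K] A) δ) (δ a))
    (hcounit_l : ∀ a : A,
      (TensorProduct.lid K A)
          ((TensorProduct.map ε (LinearMap.id : A →ₗ[K] A)) (δ a)) = a)
    (hcounit_r : ∀ a : A,
      (TensorProduct.rid K A)
          ((TensorProduct.map (LinearMap.id : A →ₗ[K] A) ε) (δ a)) = a)
    (hbimod : ∀ a x b : A,
      δ (a * x * b) =
        (TensorProduct.map (LinearMap.mulLeft K a) (LinearMap.mulRight K b)) (δ x)) :
    ∃ (F : RightModuleOver K A ⥤ RightComoduleOver K A δ ε)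
      (G : RightComoduleOver K A δ ε ⥤ RightModuleOver K A),
      F ⋙ G = 𝟭 (RightModuleOver K A) ∧
      G ⋙ F = 𝟭 (RightComoduleOver K A δ ε) ∧
      (∀ X : RightModuleOver K A, (F.obj X).V = X.V) ∧
      (∀ X : RightModuleOver K A, HEq (F.obj X).co (nablaOf K A δ X.act)) ∧
      (∀ (X Y : RightModuleOver K A) (f : X ⟶ Y), HEq (F.map f).1 f.1) ∧
      (∀ X : RightComoduleOver K A δ ε, (G.obj X).V = X.V) ∧
      (∀ X : RightComoduleOver K A δ ε, HEq (G.obj X).act (modOf K A ε X.co)) ∧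
      (∀ (X Y : RightComoduleOver K A δ ε) (f : X ⟶ Y), HEq (G.map f).1 f.1) :=
  ⟨moduleToComodule hcoassoc hcounit_r hbimod, comoduleToModule hcounit_r hbimod,
    moduleToComodule_comp_comoduleToModule hcoassoc hcounit_r hbimod,
    comoduleToModule_comp_moduleToComodule hcoassoc hcounit_l hcounit_r hbimod,
    fun _ => rfl, fun _ => HEq.rfl, fun _ _ _ => HEq.rfl,
    fun _ => rfl, fun _ => HEq.rfl, fun _ _ _ => HEq.rfl⟩
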